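/- arXiv:2304.10025 — 3 statements merged into one kernel-verified Lean document; each statement's English description precedes it below -/
import Mathlib

section
/- Let V and G be {0,1}-valued random variables with V ≥ G almost surely, and let X be any random variable. Then X is independent of the pair (V, G) if and only if X is independent of V and X is independent of G. -/
open Finset

/-! If `X` is independent of `(V, G)`, it is independent of each coordinate by marginalising.
Conversely, since `V ≥ G` the pair takes only the values `(0,0)`, `(1,1)` and `(1,0)`; the first
two are the events `{V = 0}` and `{G = 1}`, on which independence is given, and independence on
the last cell follows because the cell probabilities of `X = x` sum to `P(X = x)`. -/

theorem sum_eq_mul_sum_of_forall_eq_mul {ι κ : Type*} [Fintype ι] (s : Finset κ)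
    (f : ι → κ → ℝ) (p : ι → ℝ) (h : ∀ x k, f x k = p x * ∑ x', f x' k) (x : ι) :
    ∑ k ∈ s, f x k = p x * ∑ x', ∑ k ∈ s, f x' k := by
  rw [sum_comm, mul_sum]
  exact sum_congr rfl fun k _ => h x k

theorem eq_mul_of_forall_ne_eq_mul {ι β : Type*} [Fintype ι] [Fintype β] [DecidableEq β]
    (f : ι → β → ℝ) (hsum : ∑ x, ∑ b, f x b = 1) (b₀ : β)
    (h : ∀ x b, b ≠ b₀ → f x b = (∑ b', f x b') * ∑ x', f x' b) (x : ι) :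
    f x b₀ = (∑ b', f x b') * ∑ x', f x' b₀ := by
  have hrow := (add_sum_erase univ (f x) (mem_univ b₀)).symm
  have htotal : 1 = ∑ x', f x' b₀ + ∑ b ∈ univ.erase b₀, ∑ x', f x' b := by
    rw [← hsum, sum_comm, add_sum_erase univ (fun b => ∑ x', f x' b) (mem_univ b₀)]
  have hrest : ∑ b ∈ univ.erase b₀, f x b
      = (∑ b', f x b') * ∑ b ∈ univ.erase b₀, ∑ x', f x' b := by
    rw [mul_sum]
    exact sum_congr rfl fun b hb => h x b (ne_of_mem_erase hb)
  linear_combination (∑ b', f x b') * htotal - hrow - hrest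

theorem independence_of_pair_iff_pairwise_of_monotone_general
    {𝒳 : Type*} [Fintype 𝒳]
    (f : 𝒳 → Bool → Bool → ℝ)
    (hsum : ∑ x, ∑ v, ∑ g, f x v g = 1)
    -- V ≥ G almost surely: the event {V = v, G = g} with g > v has probability 0
    (hmono : ∀ x (v g : Bool), ¬ g ≤ v → f x v g = 0) :
    -- X ⊥ (V, G) : P(X=x, V=v, G=g) = P(X=x) · P(V=v, G=g)
    (∀ x v g, f x v g = (∑ v', ∑ g', f x v' g') * (∑ x', f x' v g)) ↔
      -- X ⊥ V : P(X=x, V=v) = P(X=x) · P(V=v)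
      ((∀ x v, (∑ g, f x v g) = (∑ v', ∑ g', f x v' g') * (∑ x', ∑ g, f x' v g)) ∧
        -- X ⊥ G : P(X=x, G=g) = P(X=x) · P(G=g)
        (∀ x g, (∑ v, f x v g) = (∑ v', ∑ g', f x v' g') * (∑ x', ∑ v, f x' v g))) := by
  have hft : ∀ x, f x false true = 0 := fun x => hmono x false true (by decide)
  constructor
  · intro h
    exact ⟨fun x v => sum_eq_mul_sum_of_forall_eq_mul univ _ _ (fun x g => h x v g) x,
      fun x g => sum_eq_mul_sum_of_forall_eq_mul univ _ _ (fun x v => h x v g) x⟩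
  · rintro ⟨hV, hG⟩
    let F : 𝒳 → Bool × Bool → ℝ := fun x c => f x c.1 c.2
    have hF : ∀ x, ∑ c, F x c = ∑ v, ∑ g, f x v g := fun x => Fintype.sum_prod_type _
    have hne : ∀ x c, c ≠ (true, false) → F x c = (∑ c', F x c') * ∑ x', F x' c := by
      rintro x ⟨_ | _, _ | _⟩ hc
      · simpa [F, hF, hft] using hV x false
      · simp [F, hft]
      · exact absurd rfl hc
      · simpa [F, hF, hft] using hG x true
    have hall : ∀ x c, F x c = (∑ c', F x c') * ∑ x', F x' c := by
      intro x c
      by_cases hc : c = (true, false)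
      · exact hc ▸ eq_mul_of_forall_ne_eq_mul F (by simpa [hF] using hsum) _ hne x
      · exact hne x c hc
    intro x v g
    simpa [F, hF] using hall x (v, g)

/-- If `V ≥ G` almost surely for `{0,1}`-valued (`Bool`-valued)
random variables `V, G`, then for any random variable `X`, `X` is independent of
the pair `(V, G)` iff `X ⊥ V` and `X ⊥ G`.  The joint law is encoded by the
probability mass function `f x v g = P(X = x, V = v, G = g)`. -/
theorem independence_of_pair_iff_pairwise_of_monotone
    {𝒳 : Type*} [Fintype 𝒳]
    (f : 𝒳 → Bool → Bool → ℝ)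
    (hnn : ∀ x v g, 0 ≤ f x v g)
    (hsum : ∑ x, ∑ v, ∑ g, f x v g = 1)
    -- V ≥ G almost surely: the event {V = v, G = g} with g > v has probability 0
    (hmono : ∀ x (v g : Bool), ¬ g ≤ v → f x v g = 0) :
    -- X ⊥ (V, G) : P(X=x, V=v, G=g) = P(X=x) · P(V=v, G=g)
    (∀ x v g, f x v g = (∑ v', ∑ g', f x v' g') * (∑ x', f x' v g)) ↔
      -- X ⊥ V : P(X=x, V=v) = P(X=x) · P(V=v)
      ((∀ x v, (∑ g, f x v g) = (∑ v', ∑ g', f x v' g') * (∑ x', ∑ g, f x' v g)) ∧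
        -- X ⊥ G : P(X=x, G=g) = P(X=x) · P(G=g)
        (∀ x g, (∑ v, f x v g) = (∑ v', ∑ g', f x v' g') * (∑ x', ∑ v, f x' v g))) :=
  independence_of_pair_iff_pairwise_of_monotone_general f hsum hmono
end

section
/- Let X, V, G be discrete random variables with strictly positive joint probabilities. If X ⊥ V | G and X ⊥ G | V, then X is independent of V (unconditionally), i.e., P(X=x | V=v) = P(X=x) for all x, v. -/
open Finset

theorem sum_eq_mul_sum_of_forall_div_eq {ι K : Type*} [Field K] {s : Finset ι} {a b : ι → K}
    {r : K} (hb : ∀ i ∈ s, b i ≠ 0) (hab : ∀ i ∈ s, a i / b i = r) :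
    ∑ i ∈ s, a i = r * ∑ i ∈ s, b i := by
  rw [mul_sum]
  exact sum_congr rfl fun i hi => (div_eq_iff (hb i hi)).mp (hab i hi)

/-- For discrete random variables `X, V, G` with strictly positive
joint probabilities, if `X ⊥ V | G` and `X ⊥ G | V`, then `X` is marginally
independent of `V`: `P(X=x | V=v) = P(X=x)` for all `x, v`. -/
theorem marginal_independence_of_two_conditional_independences
    {𝒳 𝒱 𝒢 : Type*} [Fintype 𝒳] [Fintype 𝒱] [Fintype 𝒢]
    (f : 𝒳 → 𝒱 → 𝒢 → ℝ)
    (hpos : ∀ x v g, 0 < f x v g)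
    (hsum : ∑ x, ∑ v, ∑ g, f x v g = 1)
    -- X ⊥ V | G : P(X=x | V=v, G=g) = P(X=x | G=g)
    (h1 : ∀ x v g,
      f x v g / (∑ x', f x' v g) =
        (∑ v', f x v' g) / (∑ x', ∑ v', f x' v' g))
    -- X ⊥ G | V : P(X=x | V=v, G=g) = P(X=x | V=v)
    (h2 : ∀ x v g,
      f x v g / (∑ x', f x' v g) =
        (∑ g', f x v g') / (∑ x', ∑ g', f x' v g')) :
    -- conclusion : P(X=x | V=v) = P(X=x)
    ∀ x v, (∑ g, f x v g) / (∑ x', ∑ g, f x' v g) = ∑ v', ∑ g, f x v' g := by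
  intro x v
  have hsum_ne : ∑ x, ∑ v, ∑ g, f x v g ≠ 0 := hsum ▸ one_ne_zero
  obtain ⟨x₀, -, hx₀⟩ := exists_ne_zero_of_sum_ne_zero hsum_ne
  obtain ⟨v₀, -, hv₀⟩ := exists_ne_zero_of_sum_ne_zero hx₀
  obtain ⟨g₀, -, -⟩ := exists_ne_zero_of_sum_ne_zero hv₀
  have hV_pos : ∀ v, 0 < ∑ x', ∑ g, f x' v g := fun v =>
    sum_pos (fun x' _ => sum_pos (fun g _ => hpos x' v g) ⟨g₀, mem_univ _⟩) ⟨x₀, mem_univ _⟩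
  set r := (∑ v', f x v' g₀) / (∑ x', ∑ v', f x' v' g₀)
  -- P(X=x | V=v) = P(X=x | V=v, G=g₀) = P(X=x | G=g₀), which does not depend on v.
  have hcond : ∀ v, (∑ g, f x v g) / (∑ x', ∑ g, f x' v g) = r := fun v =>
    (h2 x v g₀).symm.trans (h1 x v g₀)
  rw [hcond v, sum_eq_mul_sum_of_forall_div_eq (fun v _ => (hV_pos v).ne') (fun v _ => hcond v),
    sum_comm, hsum, mul_one]
end

section
/- Under standard monotonicity (D1 ≥ D0 almost surely, both binary) and conditional ignorability of treatment (D1 ⊥ Z | X and D0 ⊥ Z | X, jointly (D1,D0) ⊥ Z | X), the principal stratum proportions conditional on X are identified as: P(D1=1, D0=1 | X) = P(D=1 | Z=0, X), P(D1=0, D0=0 | X) = P(D=0 | Z=1, X), and P(D1=1, D0=0 | X) = P(D=1 | Z=1, X) − P(D=1 | Z=0, X), where D = Z·D1 + (1−Z)·D0. -/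
/-!
Monotonicity rules out defiers, so among the treated the units with `D = 0` are exactly the
never-takers, among the controls the units with `D = 1` are exactly the always-takers, and the
treated with `D = 1` split into always-takers and compliers. Ignorability makes the share of each
stratum within a treatment arm equal to its share given `X = x`, and subtracting the always-taker
share from the treated `D = 1` share leaves the compliers.
-/

open Finset Classical

noncomputable def Pr {Ω : Type*} [Fintype Ω] (p : Ω → ℝ) (A : Ω → Prop) : ℝ :=
  ∑ ω, if A ω then p ω else 0

section Pr

variable {Ω : Type*} [Fintype Ω] {p : Ω → ℝ}

lemma Pr_congr {A B : Ω → Prop} (h : ∀ ω, p ω ≠ 0 → (A ω ↔ B ω)) : Pr p A = Pr p B := by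
  unfold Pr
  refine Finset.sum_congr rfl fun ω _ => ?_
  by_cases hω : p ω = 0
  · simp [hω]
  · rw [if_congr (h ω hω) rfl rfl]

lemma Pr_mono (hp : ∀ ω, 0 ≤ p ω) {A B : Ω → Prop} (h : ∀ ω, A ω → B ω) :
    Pr p A ≤ Pr p B := by
  unfold Pr
  refine Finset.sum_le_sum fun ω _ => ?_
  by_cases hA : A ω
  · simp [hA, h ω hA]
  · by_cases hB : B ω <;> simp [hA, hB, hp ω]

lemma Pr_split (A : Ω → Prop) (f : Ω → Bool) :
    Pr p A = Pr p (fun ω => f ω = true ∧ A ω) + Pr p (fun ω => f ω = false ∧ A ω) := by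
  unfold Pr
  rw [← Finset.sum_add_distrib]
  refine Finset.sum_congr rfl fun ω _ => ?_
  cases hf : f ω <;> by_cases hA : A ω <;> simp [hA, hf]

end Pr

section PrincipalStrata

variable {Ω 𝒳 : Type*} [Fintype Ω] {p : Ω → ℝ} {Z D1 D0 D : Ω → Bool}

lemma Pr_observed_treated (hD : ∀ ω, D ω = if Z ω then D1 ω else D0 ω) (d : Bool)
    (A : Ω → Prop) :
    Pr p (fun ω => D ω = d ∧ Z ω = true ∧ A ω) = Pr p (fun ω => D1 ω = d ∧ Z ω = true ∧ A ω) :=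
  Pr_congr fun ω _ => by rw [hD ω]; cases Z ω <;> simp

lemma Pr_observed_control (hD : ∀ ω, D ω = if Z ω then D1 ω else D0 ω) (d : Bool)
    (A : Ω → Prop) :
    Pr p (fun ω => D ω = d ∧ Z ω = false ∧ A ω) = Pr p (fun ω => D0 ω = d ∧ Z ω = false ∧ A ω) :=
  Pr_congr fun ω _ => by rw [hD ω]; cases Z ω <;> simp

lemma Pr_D0_true_and (hp : ∀ ω, 0 ≤ p ω) (hmono : ∀ ω, 0 < p ω → D0 ω ≤ D1 ω)
    (A : Ω → Prop) :
    Pr p (fun ω => D0 ω = true ∧ A ω) = Pr p (fun ω => D1 ω = true ∧ D0 ω = true ∧ A ω) :=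
  Pr_congr fun ω hω => by
    have := Bool.le_iff_imp.mp (hmono ω ((hp ω).lt_of_ne' hω))
    cases h0 : D0 ω <;> cases h1 : D1 ω <;> simp_all

lemma Pr_D1_false_and (hp : ∀ ω, 0 ≤ p ω) (hmono : ∀ ω, 0 < p ω → D0 ω ≤ D1 ω)
    (A : Ω → Prop) :
    Pr p (fun ω => D1 ω = false ∧ A ω) = Pr p (fun ω => D1 ω = false ∧ D0 ω = false ∧ A ω) :=
  Pr_congr fun ω hω => by
    have := Bool.le_iff_imp.mp (hmono ω ((hp ω).lt_of_ne' hω))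
    cases h0 : D0 ω <;> cases h1 : D1 ω <;> simp_all

lemma Pr_D1_true_and (A : Ω → Prop) :
    Pr p (fun ω => D1 ω = true ∧ A ω) =
      Pr p (fun ω => D1 ω = true ∧ D0 ω = true ∧ A ω) +
        Pr p (fun ω => D1 ω = true ∧ D0 ω = false ∧ A ω) := by
  rw [Pr_split _ D0]
  congr 1 <;> exact Pr_congr fun ω _ => by tauto

lemma Pr_stratum_div_arm (hp : ∀ ω, 0 ≤ p ω) {X : Ω → 𝒳} {d1 d0 z : Bool} {x : 𝒳}
    (hind : Pr p (fun ω => D1 ω = d1 ∧ D0 ω = d0 ∧ Z ω = z ∧ X ω = x) *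
          Pr p (fun ω => X ω = x) =
        Pr p (fun ω => D1 ω = d1 ∧ D0 ω = d0 ∧ X ω = x) *
          Pr p (fun ω => Z ω = z ∧ X ω = x))
    (hpos : 0 < Pr p (fun ω => Z ω = z ∧ X ω = x)) :
    Pr p (fun ω => D1 ω = d1 ∧ D0 ω = d0 ∧ Z ω = z ∧ X ω = x) /
        Pr p (fun ω => Z ω = z ∧ X ω = x) =
      Pr p (fun ω => D1 ω = d1 ∧ D0 ω = d0 ∧ X ω = x) / Pr p (fun ω => X ω = x) := by
  have hposX : 0 < Pr p (fun ω => X ω = x) := hpos.trans_le (Pr_mono hp fun ω h => h.2)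
  rwa [div_eq_div_iff hpos.ne' hposX.ne']

end PrincipalStrata

theorem principal_score_identification_general
    {Ω 𝒳 : Type*} [Fintype Ω]
    (p : Ω → ℝ) (hp : ∀ ω, 0 ≤ p ω)
    (Z D1 D0 D : Ω → Bool) (X : Ω → 𝒳)
    -- consistency: D = Z·D1 + (1−Z)·D0
    (hD : ∀ ω, D ω = if Z ω then D1 ω else D0 ω)
    -- standard monotonicity: D1 ≥ D0 almost surely
    (hmono : ∀ ω, 0 < p ω → D0 ω ≤ D1 ω)
    -- ignorability: (D1, D0) ⊥ Z | X
    (hig : ∀ (d1 d0 z : Bool) (x : 𝒳),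
      Pr p (fun ω => D1 ω = d1 ∧ D0 ω = d0 ∧ Z ω = z ∧ X ω = x) *
          Pr p (fun ω => X ω = x) =
        Pr p (fun ω => D1 ω = d1 ∧ D0 ω = d0 ∧ X ω = x) *
          Pr p (fun ω => Z ω = z ∧ X ω = x))
    (x : 𝒳)
    -- positivity: 0 < P(Z=1 | X=x) < 1 (both treatment cells given X=x are nonnull)
    (hpos1 : 0 < Pr p (fun ω => Z ω = true ∧ X ω = x))
    (hpos0 : 0 < Pr p (fun ω => Z ω = false ∧ X ω = x)) :
    (Pr p (fun ω => D1 ω = true ∧ D0 ω = true ∧ X ω = x) /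
        Pr p (fun ω => X ω = x) =
      Pr p (fun ω => D ω = true ∧ Z ω = false ∧ X ω = x) /
        Pr p (fun ω => Z ω = false ∧ X ω = x)) ∧
    (Pr p (fun ω => D1 ω = false ∧ D0 ω = false ∧ X ω = x) /
        Pr p (fun ω => X ω = x) =
      Pr p (fun ω => D ω = false ∧ Z ω = true ∧ X ω = x) /
        Pr p (fun ω => Z ω = true ∧ X ω = x)) ∧
    (Pr p (fun ω => D1 ω = true ∧ D0 ω = false ∧ X ω = x) /
        Pr p (fun ω => X ω = x) =
      Pr p (fun ω => D ω = true ∧ Z ω = true ∧ X ω = x) /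
          Pr p (fun ω => Z ω = true ∧ X ω = x) -
        Pr p (fun ω => D ω = true ∧ Z ω = false ∧ X ω = x) /
          Pr p (fun ω => Z ω = false ∧ X ω = x)) := by
  have always_taker : Pr p (fun ω => D ω = true ∧ Z ω = false ∧ X ω = x) /
      Pr p (fun ω => Z ω = false ∧ X ω = x) =
      Pr p (fun ω => D1 ω = true ∧ D0 ω = true ∧ X ω = x) / Pr p (fun ω => X ω = x) := by
    rw [Pr_observed_control hD, Pr_D0_true_and hp hmono,
      Pr_stratum_div_arm hp (hig _ _ _ _) hpos0]
  refine ⟨always_taker.symm, ?_, ?_⟩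
  · rw [Pr_observed_treated hD, Pr_D1_false_and hp hmono (fun ω => Z ω = true ∧ X ω = x),
      Pr_stratum_div_arm hp (hig _ _ _ _) hpos1]
  · rw [always_taker, Pr_observed_treated hD, Pr_D1_true_and (fun ω => Z ω = true ∧ X ω = x),
      add_div, Pr_stratum_div_arm hp (hig _ _ _ _) hpos1,
      Pr_stratum_div_arm hp (hig _ _ _ _) hpos1, add_sub_cancel_left]

/-- Identification of the principal score under standard
monotonicity (`D1 ≥ D0` a.s.), consistency (`D = Z·D1 + (1−Z)·D0`), conditional
ignorability `(D1, D0) ⊥ Z | X`, and positivity: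
`P(D1=1,D0=1 | X=x) = P(D=1 | Z=0, X=x)`,
`P(D1=0,D0=0 | X=x) = P(D=0 | Z=1, X=x)`,
`P(D1=1,D0=0 | X=x) = P(D=1 | Z=1, X=x) − P(D=1 | Z=0, X=x)`. -/
theorem principal_score_identification
    {Ω 𝒳 : Type*} [Fintype Ω] [Fintype 𝒳]
    (p : Ω → ℝ) (hp : ∀ ω, 0 ≤ p ω) (hpsum : ∑ ω, p ω = 1)
    (Z D1 D0 D : Ω → Bool) (X : Ω → 𝒳)
    -- consistency: D = Z·D1 + (1−Z)·D0
    (hD : ∀ ω, D ω = if Z ω then D1 ω else D0 ω)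
    -- standard monotonicity: D1 ≥ D0 almost surely
    (hmono : ∀ ω, 0 < p ω → D0 ω ≤ D1 ω)
    -- ignorability: (D1, D0) ⊥ Z | X
    (hig : ∀ (d1 d0 z : Bool) (x : 𝒳),
      Pr p (fun ω => D1 ω = d1 ∧ D0 ω = d0 ∧ Z ω = z ∧ X ω = x) *
          Pr p (fun ω => X ω = x) =
        Pr p (fun ω => D1 ω = d1 ∧ D0 ω = d0 ∧ X ω = x) *
          Pr p (fun ω => Z ω = z ∧ X ω = x))
    (x : 𝒳)
    -- positivity: 0 < P(Z=1 | X=x) < 1 (both treatment cells given X=x are nonnull)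
    (hpos1 : 0 < Pr p (fun ω => Z ω = true ∧ X ω = x))
    (hpos0 : 0 < Pr p (fun ω => Z ω = false ∧ X ω = x)) :
    (Pr p (fun ω => D1 ω = true ∧ D0 ω = true ∧ X ω = x) /
        Pr p (fun ω => X ω = x) =
      Pr p (fun ω => D ω = true ∧ Z ω = false ∧ X ω = x) /
        Pr p (fun ω => Z ω = false ∧ X ω = x)) ∧
    (Pr p (fun ω => D1 ω = false ∧ D0 ω = false ∧ X ω = x) /
        Pr p (fun ω => X ω = x) =
      Pr p (fun ω => D ω = false ∧ Z ω = true ∧ X ω = x) /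
        Pr p (fun ω => Z ω = true ∧ X ω = x)) ∧
    (Pr p (fun ω => D1 ω = true ∧ D0 ω = false ∧ X ω = x) /
        Pr p (fun ω => X ω = x) =
      Pr p (fun ω => D ω = true ∧ Z ω = true ∧ X ω = x) /
          Pr p (fun ω => Z ω = true ∧ X ω = x) -
        Pr p (fun ω => D ω = true ∧ Z ω = false ∧ X ω = x) /
          Pr p (fun ω => Z ω = false ∧ X ω = x)) :=
  principal_score_identification_general p hp Z D1 D0 D X hD hmono hig x hpos1 hpos0
end
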